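/- Let G = A × F where A is a group in which every isomorphism between finite subgroups of A extends to an automorphism of A, F is a finite group in which every isomorphism between subgroups extends to an automorphism of F, and gcd(|a|, |b|) = 1 for all a ∈ A, b ∈ F of finite order (with all elements of A of finite order). Then every isomorphism between finite subgroups of G extends to an automorphism of G. -/
import Mathlib


theorem stmt_9 {A F : Type*} [Group A] [Group F] [Finite F]
    (hA : ∀ (B C : Subgroup A), Finite B → ∀ φ : B ≃* C,
      ∃ ψ : A ≃* A, ∀ b : B, ψ (b : A) = ((φ b : C) : A))
    (hF : ∀ (B C : Subgroup F), ∀ φ : B ≃* C,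
      ∃ ψ : F ≃* F, ∀ b : B, ψ (b : F) = ((φ b : C) : F))
    (hfinA : ∀ a : A, IsOfFinOrder a)
    (hcop : ∀ (a : A) (b : F), Nat.Coprime (orderOf a) (orderOf b)) :
    ∀ (B C : Subgroup (A × F)), Finite B → ∀ φ : B ≃* C,
      ∃ ψ : (A × F) ≃* (A × F), ∀ b : B, ψ (b : A × F) = ((φ b : C) : A × F) := by
  intro B C hB φ
  classical
  -- splitting lemma: if (a, f) ∈ H then (a, 1) ∈ H
  have split1 : ∀ (H : Subgroup (A × F)) (a : A) (f : F),
      ((a, f) : A × F) ∈ H → ((a, (1 : F)) : A × F) ∈ H := by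
    intro H a f h
    have hn : 0 < orderOf a := (hfinA a).orderOf_pos
    have hc : Nat.Coprime (orderOf f) (orderOf a) := (hcop a f).symm
    have h1 : a ^ (orderOf f ^ Nat.totient (orderOf a)) = a := by
      conv_rhs => rw [← pow_one a]
      rw [pow_eq_pow_iff_modEq]
      exact Nat.ModEq.pow_totient hc
    have h2 : f ^ (orderOf f ^ Nat.totient (orderOf a)) = 1 := by
      rw [← orderOf_dvd_iff_pow_eq_one]
      exact dvd_pow_self _ (Nat.totient_pos.mpr hn).ne'
    have hp := pow_mem h (orderOf f ^ Nat.totient (orderOf a))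
    rwa [Prod.pow_mk, h1, h2] at hp
  have split2 : ∀ (H : Subgroup (A × F)) (a : A) (f : F),
      ((a, f) : A × F) ∈ H → (((1 : A), f) : A × F) ∈ H := by
    intro H a f h
    have h1 := mul_mem (inv_mem (split1 H a f h)) h
    simpa using h1
  -- order argument: isomorphisms preserve the "pure" components
  have gen2 : ∀ (B' C' : Subgroup (A × F)) (χ : B' ≃* C') (x : B'),
      ((x : A × F)).2 = 1 → ((χ x : C') : A × F).2 = 1 := by
    intro B' C' χ x hx
    set k := orderOf ((x : A × F).1) with hk
    have hx1 : ((x : A × F)) ^ k = 1 := by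
      have hxe : (x : A × F) = ((x : A × F).1, (1 : F)) := by
        rw [← hx]
      rw [hxe, Prod.pow_mk, pow_orderOf_eq_one, one_pow]
      rfl
    have hxB : x ^ k = 1 := by
      apply Subtype.coe_injective
      simpa using hx1
    have key : ((χ x : C') : A × F) ^ k = 1 := by
      rw [← SubgroupClass.coe_pow, ← map_pow, hxB, map_one, OneMemClass.coe_one]
    have h2 : (((χ x : C') : A × F).2) ^ k = 1 := by
      have := congrArg Prod.snd key
      simpa using this
    have hd : orderOf (((χ x : C') : A × F).2) ∣ k := orderOf_dvd_of_pow_eq_one h2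
    have := ((hcop ((x : A × F).1) (((χ x : C') : A × F).2)).symm).eq_one_of_dvd hd
    exact orderOf_eq_one_iff.mp this
  have gen1 : ∀ (B' C' : Subgroup (A × F)) (χ : B' ≃* C') (x : B'),
      ((x : A × F)).1 = 1 → ((χ x : C') : A × F).1 = 1 := by
    intro B' C' χ x hx
    set k := orderOf ((x : A × F).2) with hk
    have hx1 : ((x : A × F)) ^ k = 1 := by
      have hxe : (x : A × F) = ((1 : A), (x : A × F).2) := by
        rw [← hx]
      rw [hxe, Prod.pow_mk, pow_orderOf_eq_one, one_pow]
      rfl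
    have hxB : x ^ k = 1 := by
      apply Subtype.coe_injective
      simpa using hx1
    have key : ((χ x : C') : A × F) ^ k = 1 := by
      rw [← SubgroupClass.coe_pow, ← map_pow, hxB, map_one, OneMemClass.coe_one]
    have h2 : (((χ x : C') : A × F).1) ^ k = 1 := by
      have := congrArg Prod.fst key
      simpa using this
    have hd : orderOf (((χ x : C') : A × F).1) ∣ k := orderOf_dvd_of_pow_eq_one h2
    have := (hcop (((χ x : C') : A × F).1) ((x : A × F).2)).eq_one_of_dvd hd
    exact orderOf_eq_one_iff.mp this
  -- the projected subgroups
  have memfst : ∀ (H : Subgroup (A × F)) (a : A),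
      a ∈ H.map (MonoidHom.fst A F) ↔ ((a, (1 : F)) : A × F) ∈ H := by
    intro H a
    constructor
    · rintro ⟨⟨a', f⟩, h, rfl⟩
      exact split1 H a' f h
    · intro h
      exact ⟨(a, 1), h, rfl⟩
  have memsnd : ∀ (H : Subgroup (A × F)) (f : F),
      f ∈ H.map (MonoidHom.snd A F) ↔ (((1 : A), f) : A × F) ∈ H := by
    intro H f
    constructor
    · rintro ⟨⟨a, f'⟩, h, rfl⟩
      exact split2 H a f' h
    · intro h
      exact ⟨(1, f), h, rfl⟩
  -- pure elements are mapped to pure elements, in the "eta" form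
  have hφA : ∀ (a : A) (ha : ((a, (1 : F)) : A × F) ∈ B),
      ((φ ⟨(a, 1), ha⟩ : C) : A × F) = (((φ ⟨(a, 1), ha⟩ : C) : A × F).1, 1) := by
    intro a ha
    have h2 := gen2 B C φ ⟨(a, 1), ha⟩ rfl
    exact Prod.ext rfl h2
  have hφF : ∀ (f : F) (hf : (((1 : A), f) : A × F) ∈ B),
      ((φ ⟨(1, f), hf⟩ : C) : A × F) = (1, ((φ ⟨(1, f), hf⟩ : C) : A × F).2) := by
    intro f hf
    have h1 := gen1 B C φ ⟨(1, f), hf⟩ rfl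
    exact Prod.ext h1 rfl
  have hφA' : ∀ (a : A) (ha : ((a, (1 : F)) : A × F) ∈ C),
      ((φ.symm ⟨(a, 1), ha⟩ : B) : A × F)
        = (((φ.symm ⟨(a, 1), ha⟩ : B) : A × F).1, 1) := by
    intro a ha
    have h2 := gen2 C B φ.symm ⟨(a, 1), ha⟩ rfl
    exact Prod.ext rfl h2
  have hφF' : ∀ (f : F) (hf : (((1 : A), f) : A × F) ∈ C),
      ((φ.symm ⟨(1, f), hf⟩ : B) : A × F)
        = (1, ((φ.symm ⟨(1, f), hf⟩ : B) : A × F).2) := by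
    intro f hf
    have h1 := gen1 C B φ.symm ⟨(1, f), hf⟩ rfl
    exact Prod.ext h1 rfl
  -- the induced isomorphism on the A-projections
  refine ?_
  set BA := B.map (MonoidHom.fst A F) with hBA
  set CA := C.map (MonoidHom.fst A F) with hCA
  set BF := B.map (MonoidHom.snd A F) with hBF
  set CF := C.map (MonoidHom.snd A F) with hCF
  have toA : ∀ a : BA, (((a : A), (1 : F)) : A × F) ∈ B := fun a => (memfst B a).mp a.2
  have toA' : ∀ a : CA, (((a : A), (1 : F)) : A × F) ∈ C := fun a => (memfst C a).mp a.2
  have toF : ∀ f : BF, (((1 : A), (f : F)) : A × F) ∈ B := fun f => (memsnd B f).mp f.2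
  have toF' : ∀ f : CF, (((1 : A), (f : F)) : A × F) ∈ C := fun f => (memsnd C f).mp f.2
  let eA : BA ≃* CA :=
    { toFun := fun a => ⟨((φ ⟨((a : A), 1), toA a⟩ : C) : A × F).1,
        ⟨_, (φ ⟨((a : A), 1), toA a⟩).2, rfl⟩⟩
      invFun := fun a => ⟨((φ.symm ⟨((a : A), 1), toA' a⟩ : B) : A × F).1,
        ⟨_, (φ.symm ⟨((a : A), 1), toA' a⟩).2, rfl⟩⟩
      left_inv := by
        intro a
        apply Subtype.ext
        have h1 : (⟨(((φ ⟨((a : A), 1), toA a⟩ : C) : A × F).1, 1),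
            toA' ⟨((φ ⟨((a : A), 1), toA a⟩ : C) : A × F).1,
              ⟨_, (φ ⟨((a : A), 1), toA a⟩).2, rfl⟩⟩⟩ : C)
            = φ ⟨((a : A), 1), toA a⟩ := by
          apply Subtype.ext
          exact (hφA _ (toA a)).symm
        show ((φ.symm _ : B) : A × F).1 = (a : A)
        rw [h1, MulEquiv.symm_apply_apply]
      right_inv := by
        intro a
        apply Subtype.ext
        have h1 : (⟨(((φ.symm ⟨((a : A), 1), toA' a⟩ : B) : A × F).1, 1),
            toA ⟨((φ.symm ⟨((a : A), 1), toA' a⟩ : B) : A × F).1,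
              ⟨_, (φ.symm ⟨((a : A), 1), toA' a⟩).2, rfl⟩⟩⟩ : B)
            = φ.symm ⟨((a : A), 1), toA' a⟩ := by
          apply Subtype.ext
          exact (hφA' _ (toA' a)).symm
        show ((φ _ : C) : A × F).1 = (a : A)
        rw [h1, MulEquiv.apply_symm_apply]
      map_mul' := by
        intro a b
        apply Subtype.ext
        have h1 : (⟨(((a : A) * (b : A)), 1), toA (a * b)⟩ : B)
            = ⟨(((a : A)), 1), toA a⟩ * ⟨(((b : A)), 1), toA b⟩ := by
          apply Subtype.ext
          simp
        show ((φ ⟨(((a : A) * (b : A)), 1), toA (a * b)⟩ : C) : A × F).1 = _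
        rw [h1, map_mul]
        simp }
  let eF : BF ≃* CF :=
    { toFun := fun f => ⟨((φ ⟨(1, (f : F)), toF f⟩ : C) : A × F).2,
        ⟨_, (φ ⟨(1, (f : F)), toF f⟩).2, rfl⟩⟩
      invFun := fun f => ⟨((φ.symm ⟨(1, (f : F)), toF' f⟩ : B) : A × F).2,
        ⟨_, (φ.symm ⟨(1, (f : F)), toF' f⟩).2, rfl⟩⟩
      left_inv := by
        intro f
        apply Subtype.ext
        have h1 : (⟨(1, ((φ ⟨(1, (f : F)), toF f⟩ : C) : A × F).2),
            toF' ⟨((φ ⟨(1, (f : F)), toF f⟩ : C) : A × F).2,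
              ⟨_, (φ ⟨(1, (f : F)), toF f⟩).2, rfl⟩⟩⟩ : C)
            = φ ⟨(1, (f : F)), toF f⟩ := by
          apply Subtype.ext
          exact (hφF _ (toF f)).symm
        show ((φ.symm _ : B) : A × F).2 = (f : F)
        rw [h1, MulEquiv.symm_apply_apply]
      right_inv := by
        intro f
        apply Subtype.ext
        have h1 : (⟨(1, ((φ.symm ⟨(1, (f : F)), toF' f⟩ : B) : A × F).2),
            toF ⟨((φ.symm ⟨(1, (f : F)), toF' f⟩ : B) : A × F).2,
              ⟨_, (φ.symm ⟨(1, (f : F)), toF' f⟩).2, rfl⟩⟩⟩ : B)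
            = φ.symm ⟨(1, (f : F)), toF' f⟩ := by
          apply Subtype.ext
          exact (hφF' _ (toF' f)).symm
        show ((φ _ : C) : A × F).2 = (f : F)
        rw [h1, MulEquiv.apply_symm_apply]
      map_mul' := by
        intro a b
        apply Subtype.ext
        have h1 : (⟨(1, ((a : F) * (b : F))), toF (a * b)⟩ : B)
            = ⟨(1, ((a : F))), toF a⟩ * ⟨(1, ((b : F))), toF b⟩ := by
          apply Subtype.ext
          simp
        show ((φ ⟨(1, ((a : F) * (b : F))), toF (a * b)⟩ : C) : A × F).2 = _
        rw [h1, map_mul]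
        simp }
  have hBAfin : Finite BA := by
    have hs : ((B : Set (A × F))).Finite := Set.toFinite _
    have : ((BA : Set A)).Finite := by
      rw [hBA, Subgroup.coe_map]
      exact hs.image _
    exact this.to_subtype
  obtain ⟨ψA, hψA⟩ := hA BA CA hBAfin eA
  obtain ⟨ψF, hψF⟩ := hF BF CF eF
  refine ⟨ψA.prodCongr ψF, ?_⟩
  intro b
  have hb1 : (((b : A × F).1, (1 : F)) : A × F) ∈ B := by
    apply split1 B (b : A × F).1 (b : A × F).2
    simp
  have hb2 : (((1 : A), (b : A × F).2) : A × F) ∈ B := by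
    apply split2 B (b : A × F).1 (b : A × F).2
    simp
  have hbsplit : b = (⟨((b : A × F).1, 1), hb1⟩ : B) * ⟨(1, (b : A × F).2), hb2⟩ := by
    apply Subtype.ext
    simp
  have hmemA : (b : A × F).1 ∈ BA := ⟨b, b.2, rfl⟩
  have hmemF : (b : A × F).2 ∈ BF := ⟨b, b.2, rfl⟩
  have hA1 := hψA ⟨(b : A × F).1, hmemA⟩
  have hF1 := hψF ⟨(b : A × F).2, hmemF⟩
  have heAval : ((eA ⟨(b : A × F).1, hmemA⟩ : CA) : A)
      = ((φ ⟨((b : A × F).1, 1), hb1⟩ : C) : A × F).1 := rfl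
  have heFval : ((eF ⟨(b : A × F).2, hmemF⟩ : CF) : F)
      = ((φ ⟨(1, (b : A × F).2), hb2⟩ : C) : A × F).2 := rfl
  have hrhs : ((φ b : C) : A × F)
      = (((φ ⟨((b : A × F).1, 1), hb1⟩ : C) : A × F).1,
         ((φ ⟨(1, (b : A × F).2), hb2⟩ : C) : A × F).2) := by
    conv_lhs => rw [hbsplit]
    rw [map_mul]
    push_cast
    rw [hφA _ hb1, hφF _ hb2]
    simp
  rw [hrhs]
  have : (ψA.prodCongr ψF) (b : A × F) = (ψA (b : A × F).1, ψF (b : A × F).2) := rfl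
  rw [this, hA1, hF1, heAval, heFval]
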